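/- Let r0 > 0, γ ∈ (0,1], λ₁ ≥ 0 and λ₂ > 8π/γ. For ε > 0 define u_ε : ℝ² → ℝ by u_ε(x) = log(ε²/((ε² + ‖x‖²)²)) and v_ε = u_ε − (π·r0²)⁻¹·∫_B u_ε(x) dx. Then the quantity J_B(−v_ε/γ) := (1/2)·∫_B ‖∇(−v_ε/γ)(x)‖² dx − λ₁·log(∫_B e^{−v_ε(x)/γ} dx) − (λ₂/γ)·log(∫_B e^{v_ε(x)} dx) tends to −∞ as ε → 0⁺. -/

import Mathlib

open Real

/-- The Liouville bubble u_ε on ℝ². -/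
noncomputable def bubble (ε : ℝ) (x : EuclideanSpace ℝ (Fin 2)) : ℝ :=
  Real.log (ε ^ 2 / (ε ^ 2 + ‖x‖ ^ 2) ^ 2)

/-- The normalized bubble v_ε = u_ε − (π r0²)⁻¹ ∫_B u_ε. -/
noncomputable def nbubble (r0 ε : ℝ) (x : EuclideanSpace ℝ (Fin 2)) : ℝ :=
  bubble ε x -
    (π * r0 ^ 2)⁻¹ * ∫ y in Metric.ball (0 : EuclideanSpace ℝ (Fin 2)) r0, bubble ε y

open MeasureTheory Set

local notation "E2" => EuclideanSpace ℝ (Fin 2)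

lemma vol_ball (r : ℝ) (hr : 0 ≤ r) : (volume (Metric.ball (0:E2) r)).toReal = π * r^2 := by
  rw [EuclideanSpace.volume_ball]
  simp only [Fintype.card_fin]
  rw [show ((2:ℕ):ℝ)/2 + 1 = 2 by norm_num, Real.Gamma_two]
  rw [← ENNReal.ofReal_pow hr, ← ENNReal.ofReal_mul (by positivity),
    ENNReal.toReal_ofReal (by positivity)]
  rw [Real.sq_sqrt pi_nonneg]
  ring

lemma radial_ball (r0 : ℝ) (g : ℝ → ℝ) :
    ∫ x in Metric.ball (0:E2) r0, g ‖x‖ = 2 * π * ∫ y in Ioo (0:ℝ) r0, y * g y := by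
  have h1 : ∫ x in Metric.ball (0:E2) r0, g ‖x‖ = ∫ x : E2, (Iio r0).indicator g ‖x‖ := by
    rw [← integral_indicator measurableSet_ball]
    congr 1
    ext x
    by_cases h : ‖x‖ < r0
    · rw [Set.indicator_of_mem (by simpa [Metric.mem_ball, dist_zero_right] using h),
        Set.indicator_of_mem (by simpa [mem_Iio] using h)]
    · rw [Set.indicator_of_notMem (by simpa [Metric.mem_ball, dist_zero_right] using h),
        Set.indicator_of_notMem (by simpa [mem_Iio] using h)]
  rw [h1, MeasureTheory.integral_fun_norm_addHaar volume ((Iio r0).indicator g)]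
  rw [finrank_euclideanSpace_fin]
  have h2 : ∀ y : ℝ, y ^ (2 - 1) • (Iio r0).indicator g y
      = (Iio r0).indicator (fun y => y * g y) y := by
    intro y
    simp [Set.indicator_apply]
  simp only [h2]
  rw [setIntegral_indicator measurableSet_Iio]
  have h3 : Ioi (0:ℝ) ∩ Iio r0 = Ioo 0 r0 := by ext y; simp [mem_Ioo, and_comm]
  rw [h3, measureReal_def, vol_ball 1 zero_le_one]
  simp [smul_eq_mul]
  ring

lemma oneD (ε r0 : ℝ) (hε : 0 < ε) (hr : 0 < r0) :
    ∫ y in Ioo (0:ℝ) r0, y * (ε^2+y^2)⁻¹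
      = (1/2) * (Real.log (ε^2+r0^2) - Real.log (ε^2)) := by
  have key : ∫ y in (0:ℝ)..r0, y * (ε^2+y^2)⁻¹
      = (1/2) * Real.log (ε^2+r0^2) - (1/2) * Real.log (ε^2+0^2) := by
    refine intervalIntegral.integral_eq_sub_of_hasDerivAt
      (f := fun y => (1/2) * Real.log (ε^2+y^2)) ?_ ?_
    · intro y _
      have hpos : (0:ℝ) < ε^2 + y^2 := by positivity
      have h1 : HasDerivAt (fun y : ℝ => ε^2 + y^2) (2*y) y := by
        simpa using ((hasDerivAt_pow 2 y).const_add (ε^2))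
      have h2 := (h1.log hpos.ne').const_mul (1/2 : ℝ)
      refine h2.congr_deriv ?_
      field_simp
    · apply Continuous.intervalIntegrable
      exact continuous_id.mul ((continuous_const.add (continuous_pow 2)).inv₀
        (fun y => (by positivity : (0:ℝ) < ε^2 + y^2).ne'))
  rw [← MeasureTheory.integral_Ioc_eq_integral_Ioo, ← intervalIntegral.integral_of_le hr.le, key]
  simp
  ring

lemma bubble_eq (ε : ℝ) (hε : ε ≠ 0) (x : E2) :
    bubble ε x = Real.log (ε^2) - 2 * Real.log (ε^2 + ‖x‖^2) := by
  have h : (0:ℝ) < ε^2 + ‖x‖^2 := by positivity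
  rw [bubble, Real.log_div (by positivity) (by positivity), Real.log_pow]
  norm_num

lemma bubble_continuous (ε : ℝ) (hε : ε ≠ 0) : Continuous (bubble ε) := by
  have h : ∀ x : E2, bubble ε x = Real.log (ε^2) - 2 * Real.log (ε^2 + ‖x‖^2) :=
    bubble_eq ε hε
  rw [show bubble ε = fun x : E2 => Real.log (ε^2) - 2 * Real.log (ε^2 + ‖x‖^2) from funext h]
  exact continuous_const.sub (continuous_const.mul
    ((continuous_const.add (continuous_norm.pow 2)).log (fun x => (by positivity : (0:ℝ) < ε^2 + ‖x‖^2).ne')))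

lemma grad_main (ε γ C : ℝ) (hε : 0 < ε) (hγ : γ ≠ 0) (x : E2) :
    HasGradientAt (fun y : E2 => -(bubble ε y - C) / γ)
      ((4 / (γ * (ε^2 + ‖x‖^2))) • x) x := by
  have hpos : ∀ y : E2, (0:ℝ) < ε^2 + ‖y‖^2 := fun y => by positivity
  have heq : (fun y : E2 => -(bubble ε y - C) / γ)
      = fun y : E2 => (2/γ) * Real.log (ε^2 + ‖y‖^2) + (C - Real.log (ε^2)) / γ := by
    funext y
    rw [bubble_eq ε hε.ne']
    field_simp
    ring
  rw [heq, hasGradientAt_iff_hasFDerivAt]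
  have h1 : HasFDerivAt (fun y : E2 => ε^2 + ‖y‖^2) (2 • (innerSL ℝ x)) x := by
    simpa using ((hasFDerivAt_id x).norm_sq).const_add (ε^2)
  have h2 := ((Real.hasDerivAt_log (hpos x).ne').comp_hasFDerivAt x h1)
  have h3 := (h2.const_mul (2/γ : ℝ)).add_const ((C - Real.log (ε^2)) / γ)
  refine h3.congr_fderiv ?_
  ext y
  simp [InnerProductSpace.toDual_apply_apply, real_inner_smul_left, smul_smul]
  field_simp
  try ring
  try tauto

lemma contIntegrableOn {f : E2 → ℝ} (hf : Continuous f) {s : Set E2} {r : ℝ}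
    (hs : s ⊆ Metric.closedBall 0 r) : IntegrableOn f s :=
  ((hf.continuousOn).integrableOn_compact (isCompact_closedBall 0 r)).mono_set hs

lemma dirichlet_bound (r0 γ ε : ℝ) (hr : 0 < r0) (hγ : 0 < γ) (hε : 0 < ε) (hεr : ε < r0) :
    ∫ x in Metric.ball (0:E2) r0, ‖gradient (fun y => -nbubble r0 ε y / γ) x‖ ^ 2
      ≤ (16*π/γ^2) * (Real.log (2*r0^2) - 2*Real.log ε) := by
  have hc1 : Continuous fun x : E2 => (ε^2 + ‖x‖^2) :=
    continuous_const.add (continuous_norm.pow 2)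
  set C : ℝ := (π * r0 ^ 2)⁻¹ * ∫ y in Metric.ball (0 : E2) r0, bubble ε y with hC
  have hnm : ∀ x : E2, ‖gradient (fun y => -nbubble r0 ε y / γ) x‖ ^ 2
      = (4 / (γ * (ε^2 + ‖x‖^2)))^2 * ‖x‖^2 := by
    intro x
    have h0 : (fun y => -nbubble r0 ε y / γ) = (fun y : E2 => -(bubble ε y - C) / γ) := rfl
    rw [h0, (grad_main ε γ C hε hγ.ne' x).gradient, norm_smul, mul_pow,
      Real.norm_eq_abs, sq_abs]
  simp only [hnm]
  have step1 : ∫ x in Metric.ball (0:E2) r0, (4 / (γ * (ε^2 + ‖x‖^2)))^2 * ‖x‖^2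
      ≤ ∫ x in Metric.ball (0:E2) r0, (16/γ^2) * (ε^2 + ‖x‖^2)⁻¹ := by
    refine setIntegral_mono_on ?_ ?_ measurableSet_ball ?_
    · exact contIntegrableOn
        (((continuous_const.div (continuous_const.mul hc1) (fun x => (by positivity : (0:ℝ) < γ * (ε^2 + ‖x‖^2)).ne')).pow 2).mul
          (continuous_norm.pow 2)) Metric.ball_subset_closedBall
    · exact contIntegrableOn
        (continuous_const.mul (hc1.inv₀ (fun x => by positivity)))
        Metric.ball_subset_closedBall
    · intro x _
      have ht : (0:ℝ) < ε^2 + ‖x‖^2 := by positivity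
      have hn : ‖x‖^2 ≤ ε^2 + ‖x‖^2 := by nlinarith [sq_nonneg ε]
      calc (4 / (γ * (ε^2 + ‖x‖^2)))^2 * ‖x‖^2
          = 16/γ^2 * (‖x‖^2 / (ε^2 + ‖x‖^2)^2) := by field_simp; ring
        _ ≤ 16/γ^2 * ((ε^2 + ‖x‖^2) / (ε^2 + ‖x‖^2)^2) := by
            refine mul_le_mul_of_nonneg_left ?_ (by positivity)
            gcongr
        _ = 16/γ^2 * (ε^2 + ‖x‖^2)⁻¹ := by field_simp
  have step2 : ∫ x in Metric.ball (0:E2) r0, (16/γ^2) * (ε^2 + ‖x‖^2)⁻¹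
      = (16/γ^2) * (π * (Real.log (ε^2+r0^2) - Real.log (ε^2))) := by
    rw [MeasureTheory.integral_const_mul]
    congr 1
    have := radial_ball r0 (fun y => (ε^2+y^2)⁻¹)
    rw [this, oneD ε r0 hε hr]
    ring
  have step3 : (16/γ^2) * (π * (Real.log (ε^2+r0^2) - Real.log (ε^2)))
      ≤ (16*π/γ^2) * (Real.log (2*r0^2) - 2*Real.log ε) := by
    have hlog1 : Real.log (ε^2+r0^2) ≤ Real.log (2*r0^2) :=
      Real.log_le_log (by positivity) (by nlinarith)
    have hlog2 : Real.log (ε^2) = 2*Real.log ε := by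
      rw [Real.log_pow]; norm_num
    rw [hlog2]
    have : (16/γ^2) * (π * (Real.log (ε^2+r0^2) - 2*Real.log ε))
        ≤ (16/γ^2) * (π * (Real.log (2*r0^2) - 2*Real.log ε)) := by
      refine mul_le_mul_of_nonneg_left ?_ (by positivity)
      refine mul_le_mul_of_nonneg_left (by linarith) pi_nonneg
    calc _ ≤ (16/γ^2) * (π * (Real.log (2*r0^2) - 2*Real.log ε)) := this
      _ = (16*π/γ^2) * (Real.log (2*r0^2) - 2*Real.log ε) := by ring
  linarith [step1, step2.le, step3, step2.ge]

local notation "B" r0 => Metric.ball (0:E2) r0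

lemma nbubble_continuous (r0 ε : ℝ) (hε : ε ≠ 0) : Continuous (nbubble r0 ε) :=
  (bubble_continuous ε hε).sub continuous_const

lemma int_nbubble_zero (r0 ε : ℝ) (hr : 0 < r0) (hε : 0 < ε) :
    ∫ x in B r0, nbubble r0 ε x = 0 := by
  have hIu : IntegrableOn (bubble ε) (B r0) :=
    contIntegrableOn (bubble_continuous ε hε.ne') Metric.ball_subset_closedBall
  have hIc : IntegrableOn (fun _ : E2 =>
      (π * r0 ^ 2)⁻¹ * ∫ y in B r0, bubble ε y) (B r0) := by
    exact (integrableOn_const_iff).mpr (Or.inr measure_ball_lt_top)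
  rw [show (fun x => nbubble r0 ε x) = fun x => bubble ε x -
      (π * r0 ^ 2)⁻¹ * ∫ y in B r0, bubble ε y from rfl]
  rw [integral_sub hIu hIc, setIntegral_const, measureReal_def, vol_ball r0 hr.le, smul_eq_mul]
  field_simp
  ring

lemma X_bound (r0 γ ε : ℝ) (hr : 0 < r0) (hγ : 0 < γ) (hε : 0 < ε) :
    π * r0^2 ≤ ∫ x in B r0, Real.exp (-nbubble r0 ε x / γ) := by
  have hcont : Continuous (fun x : E2 => -nbubble r0 ε x / γ) :=
    ((nbubble_continuous r0 ε hε.ne').neg).div_const γ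
  have h1 : ∫ x in B r0, (-nbubble r0 ε x / γ + 1)
      ≤ ∫ x in B r0, Real.exp (-nbubble r0 ε x / γ) := by
    refine setIntegral_mono_on
      (contIntegrableOn (hcont.add continuous_const) Metric.ball_subset_closedBall)
      (contIntegrableOn (hcont.rexp) Metric.ball_subset_closedBall)
      measurableSet_ball (fun x _ => Real.add_one_le_exp _)
  have h2 : ∫ x in B r0, (-nbubble r0 ε x / γ + 1) = π * r0^2 := by
    rw [integral_add ((contIntegrableOn hcont Metric.ball_subset_closedBall))
      ((integrableOn_const_iff).mpr (Or.inr measure_ball_lt_top))]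
    have h3 : ∫ x in B r0, -nbubble r0 ε x / γ
        = -(∫ x in B r0, nbubble r0 ε x) / γ := by
      rw [integral_div, integral_neg]
    rw [h3, int_nbubble_zero r0 ε hr hε]
    rw [setIntegral_const, measureReal_def, vol_ball r0 hr.le]; simp
  linarith

lemma I_bound (r0 ε : ℝ) (hε : 0 < ε) (hεr : ε ≤ r0) :
    π/4 ≤ ∫ x in B r0, Real.exp (bubble ε x) := by
  have hexp : ∀ x : E2, Real.exp (bubble ε x) = ε^2 / (ε^2 + ‖x‖^2)^2 := fun x =>
    Real.exp_log (by positivity)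
  have hint : IntegrableOn (fun x => Real.exp (bubble ε x)) (B r0) :=
    contIntegrableOn ((bubble_continuous ε hε.ne').rexp) Metric.ball_subset_closedBall
  have h1 : ∫ x in B ε, Real.exp (bubble ε x) ≤ ∫ x in B r0, Real.exp (bubble ε x) := by
    refine setIntegral_mono_set hint ?_ (HasSubset.Subset.eventuallyLE (Metric.ball_subset_ball hεr))
    exact Filter.Eventually.of_forall (fun x => (Real.exp_pos _).le)
  have h2 : ∫ x in B ε, (ε^2 / (2*ε^2)^2 : ℝ) ≤ ∫ x in B ε, Real.exp (bubble ε x) := by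
    refine setIntegral_mono_on ((integrableOn_const_iff).mpr (Or.inr measure_ball_lt_top))
      (hint.mono_set (Metric.ball_subset_ball hεr)) measurableSet_ball ?_
    intro x hx
    rw [hexp x]
    have hxn : ‖x‖ < ε := by simpa [Metric.mem_ball, dist_zero_right] using hx
    have ha : ε^2 + ‖x‖^2 ≤ 2*ε^2 := by nlinarith [norm_nonneg x]
    have : (ε^2 + ‖x‖^2)^2 ≤ (2*ε^2)^2 := by
      exact pow_le_pow_left₀ (by positivity) ha 2
    gcongr <;> positivity
  have h3 : ∫ x in B ε, (ε^2 / (2*ε^2)^2 : ℝ) = π/4 := by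
    rw [setIntegral_const, measureReal_def, vol_ball ε hε.le, smul_eq_mul]
    field_simp
    ring
  linarith

lemma logY_eq (r0 ε : ℝ) (hr : 0 < r0) (hε : 0 < ε) (hεr : ε ≤ r0) :
    Real.log (∫ x in B r0, Real.exp (nbubble r0 ε x))
      = Real.log (∫ x in B r0, Real.exp (bubble ε x))
        - (π * r0 ^ 2)⁻¹ * ∫ y in B r0, bubble ε y := by
  set m : ℝ := (π * r0 ^ 2)⁻¹ * ∫ y in B r0, bubble ε y with hm
  have h1 : ∀ x : E2, Real.exp (nbubble r0 ε x) = Real.exp (bubble ε x) * Real.exp (-m) := by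
    intro x
    rw [show nbubble r0 ε x = bubble ε x - m from rfl, Real.exp_sub]
    rw [Real.exp_neg]
    field_simp
  simp only [h1]
  rw [MeasureTheory.integral_mul_const]
  have hIpos : 0 < ∫ x in B r0, Real.exp (bubble ε x) :=
    lt_of_lt_of_le (by positivity) (I_bound r0 ε hε hεr)
  rw [Real.log_mul hIpos.ne' (Real.exp_ne_zero _), Real.log_exp]
  ring

lemma m_bound (r0 ε δ : ℝ) (hr : 0 < r0) (hε : 0 < ε) (hδ0 : 0 < δ) (hδr : δ < r0) :
    ∫ x in B r0, bubble ε x ≤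
      (-(2*Real.log ε))*(π*δ^2) + (2*Real.log ε - 4*Real.log δ)*(π*(r0^2-δ^2)) := by
  have hIu : IntegrableOn (bubble ε) (B r0) :=
    contIntegrableOn (bubble_continuous ε hε.ne') Metric.ball_subset_closedBall
  have hsub : (B δ) ⊆ B r0 := Metric.ball_subset_ball hδr.le
  have hsplit := MeasureTheory.integral_inter_add_diff (t := B δ) measurableSet_ball hIu
  have hinter : (B r0) ∩ (B δ) = B δ := inter_eq_self_of_subset_right hsub
  rw [hinter] at hsplit
  have hlogε : Real.log (ε^2) = 2*Real.log ε := by rw [Real.log_pow]; norm_num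
  have hlogδ : Real.log (δ^2) = 2*Real.log δ := by rw [Real.log_pow]; norm_num
  -- bound on the small ball
  have hb1 : ∫ x in B δ, bubble ε x ≤ (-(2*Real.log ε)) * (π*δ^2) := by
    have h1 : ∫ x in B δ, bubble ε x ≤ ∫ _x in B δ, (-(2*Real.log ε)) := by
      refine setIntegral_mono_on (hIu.mono_set hsub)
        ((integrableOn_const_iff).mpr (Or.inr measure_ball_lt_top)) measurableSet_ball ?_
      intro x _
      rw [bubble_eq ε hε.ne']
      have : Real.log (ε^2) ≤ Real.log (ε^2 + ‖x‖^2) :=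
        Real.log_le_log (by positivity) (by nlinarith [norm_nonneg x])
      linarith [hlogε]
    rw [setIntegral_const, measureReal_def, vol_ball δ hδ0.le, smul_eq_mul] at h1
    linarith
  -- bound on the annulus
  have hvol : (volume ((B r0) \ (B δ))).toReal = π*(r0^2 - δ^2) := by
    rw [measure_diff hsub measurableSet_ball.nullMeasurableSet measure_ball_lt_top.ne]
    rw [ENNReal.toReal_sub_of_le (measure_mono hsub) measure_ball_lt_top.ne]
    rw [vol_ball r0 hr.le, vol_ball δ hδ0.le]
    ring
  have hb2 : ∫ x in (B r0) \ (B δ), bubble ε x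
      ≤ (2*Real.log ε - 4*Real.log δ) * (π*(r0^2-δ^2)) := by
    have h1 : ∫ x in (B r0) \ (B δ), bubble ε x
        ≤ ∫ _x in (B r0) \ (B δ), (2*Real.log ε - 4*Real.log δ) := by
      refine setIntegral_mono_on (hIu.mono_set diff_subset)
        ((integrableOn_const_iff).mpr (Or.inr
          (lt_of_le_of_lt (measure_mono diff_subset) measure_ball_lt_top)))
        (measurableSet_ball.diff measurableSet_ball) ?_
      intro x hx
      have hxδ : δ ≤ ‖x‖ := by
        have := hx.2
        simpa [Metric.mem_ball, dist_zero_right, not_lt] using this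
      rw [bubble_eq ε hε.ne']
      have : Real.log (δ^2) ≤ Real.log (ε^2 + ‖x‖^2) :=
        Real.log_le_log (by positivity) (by nlinarith [norm_nonneg x, sq_nonneg ε])
      linarith [hlogε, hlogδ]
    rw [setIntegral_const, measureReal_def, hvol, smul_eq_mul] at h1
    linarith
  linarith

/-- if lam₂ > 8π/γ then J_B(−v_ε/γ) → −∞ as ε → 0⁺. -/
theorem stmt_15 (r0 γ lam₁ lam₂ : ℝ) (hr : 0 < r0) (hγ : γ ∈ Set.Ioc (0:ℝ) 1)
    (h₁ : 0 ≤ lam₁) (h₂ : 8 * π / γ < lam₂) :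
    Filter.Tendsto (fun ε : ℝ =>
        (1 / 2) * (∫ x in Metric.ball (0 : EuclideanSpace ℝ (Fin 2)) r0,
            ‖gradient (fun y => -nbubble r0 ε y / γ) x‖ ^ 2)
        - lam₁ * Real.log (∫ x in Metric.ball (0 : EuclideanSpace ℝ (Fin 2)) r0,
            Real.exp (-nbubble r0 ε x / γ))
        - (lam₂ / γ) * Real.log (∫ x in Metric.ball (0 : EuclideanSpace ℝ (Fin 2)) r0,
            Real.exp (nbubble r0 ε x)))
      (nhdsWithin 0 (Set.Ioi 0)) Filter.atBot := by
  obtain ⟨hγ0, hγ1⟩ := hγ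
  have hπ : (0:ℝ) < π := pi_pos
  have hl2 : 0 < lam₂ := lt_trans (by positivity) h₂
  set a : ℝ := 8*π/(γ*lam₂) with ha
  have ha0 : 0 < a := by positivity
  have h8 : 8*π < lam₂*γ := (div_lt_iff₀ hγ0).mp h₂
  have ha1 : a < 1 := by
    rw [ha, div_lt_one (by positivity)]
    nlinarith
  set θ : ℝ := (a+1)/2 with hθ
  have hθa : a < θ := by rw [hθ]; linarith
  have hθ1 : θ < 1 := by rw [hθ]; linarith
  have hθ0 : 0 < θ := by rw [hθ]; linarith
  set δ : ℝ := r0 * Real.sqrt ((1-θ)/2) with hδ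
  have hs0 : 0 < (1-θ)/2 := by linarith
  have hδ0 : 0 < δ := mul_pos hr (Real.sqrt_pos.mpr hs0)
  have hδr : δ < r0 := by
    have h1 : Real.sqrt ((1-θ)/2) < 1 := by
      nlinarith [Real.sq_sqrt hs0.le, Real.sqrt_nonneg ((1-θ)/2)]
    calc δ = r0 * Real.sqrt ((1-θ)/2) := hδ
      _ < r0 * 1 := by exact mul_lt_mul_of_pos_left h1 hr
      _ = r0 := mul_one r0
  have hδsq : δ^2 = r0^2*((1-θ)/2) := by
    rw [hδ, mul_pow, Real.sq_sqrt hs0.le]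
  set Cδ : ℝ := -4*Real.log δ * ((r0^2-δ^2)/r0^2) with hCδ
  set c : ℝ := 2*θ*lam₂/γ - 16*π/γ^2 with hc
  have hcpos : 0 < c := by
    have h9 : 8*π < θ*(γ*lam₂) := (div_lt_iff₀ (by positivity)).mp hθa
    have : 16*π/γ^2 < 2*θ*lam₂/γ := by
      rw [div_lt_div_iff₀ (by positivity) hγ0]
      nlinarith
    rw [hc]; linarith
  set K : ℝ := (8*π/γ^2)*Real.log (2*r0^2) - lam₁*Real.log (π*r0^2)
      - (lam₂/γ)*Real.log (π/4) + (lam₂/γ)*Cδ with hK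
  have hg : Filter.Tendsto (fun ε : ℝ => K + c * Real.log ε)
      (nhdsWithin 0 (Set.Ioi 0)) Filter.atBot := by
    apply Filter.tendsto_atBot_add_const_left
    exact (Real.tendsto_log_nhdsGT_zero).const_mul_atBot hcpos
  refine Filter.tendsto_atBot_mono' _ ?_ hg
  filter_upwards [Ioo_mem_nhdsGT_of_mem (Set.left_mem_Ico.mpr hr)] with ε hε
  obtain ⟨hε0, hεr⟩ := hε
  have hD := dirichlet_bound r0 γ ε hr hγ0 hε0 hεr
  have hX := X_bound r0 γ ε hr hγ0 hε0
  have hXlog : Real.log (π*r0^2)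
      ≤ Real.log (∫ x in Metric.ball (0 : EuclideanSpace ℝ (Fin 2)) r0,
          Real.exp (-nbubble r0 ε x / γ)) :=
    Real.log_le_log (by positivity) hX
  have hX2 := mul_le_mul_of_nonneg_left hXlog h₁
  have hI := I_bound r0 ε hε0 hεr.le
  have hIlog : Real.log (π/4)
      ≤ Real.log (∫ x in Metric.ball (0 : EuclideanSpace ℝ (Fin 2)) r0,
          Real.exp (bubble ε x)) :=
    Real.log_le_log (by positivity) hI
  have hYeq := logY_eq r0 ε hr hε0 hεr.le
  have hM := m_bound r0 ε δ hr hε0 hδ0 hδr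
  have hM2 := mul_le_mul_of_nonneg_left hM
    (le_of_lt (inv_pos.mpr (show (0:ℝ) < π*r0^2 by positivity)))
  have key : (π*r0^2)⁻¹ * ((-(2*Real.log ε))*(π*δ^2)
        + (2*Real.log ε - 4*Real.log δ)*(π*(r0^2-δ^2)))
      = 2*θ*Real.log ε + Cδ := by
    rw [hCδ, hδsq]
    field_simp
    ring
  rw [key] at hM2
  -- bound the Y term
  have hYbound : -(lam₂/γ) * Real.log (∫ x in Metric.ball (0 : EuclideanSpace ℝ (Fin 2)) r0,
        Real.exp (nbubble r0 ε x))
      ≤ (lam₂/γ) * (2*θ*Real.log ε + Cδ - Real.log (π/4)) := by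
    have h1 : -(Real.log (∫ x in Metric.ball (0 : EuclideanSpace ℝ (Fin 2)) r0,
        Real.exp (nbubble r0 ε x))) ≤ 2*θ*Real.log ε + Cδ - Real.log (π/4) := by
      rw [hYeq]
      linarith
    have h2 := mul_le_mul_of_nonneg_left h1 (le_of_lt (div_pos hl2 hγ0))
    linarith [h2]
  have hgoal : (1 / 2) * (∫ x in Metric.ball (0 : EuclideanSpace ℝ (Fin 2)) r0,
            ‖gradient (fun y => -nbubble r0 ε y / γ) x‖ ^ 2)
        - lam₁ * Real.log (∫ x in Metric.ball (0 : EuclideanSpace ℝ (Fin 2)) r0,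
            Real.exp (-nbubble r0 ε x / γ))
        - (lam₂ / γ) * Real.log (∫ x in Metric.ball (0 : EuclideanSpace ℝ (Fin 2)) r0,
            Real.exp (nbubble r0 ε x)) ≤ K + c * Real.log ε := by
    rw [hK, hc]
    have e1 : 16*π/γ^2*(Real.log (2*r0^2) - 2*Real.log ε)
        = 16*π/γ^2*Real.log (2*r0^2) - 32*π/γ^2*Real.log ε := by ring
    have e2 : lam₂/γ*(2*θ*Real.log ε + Cδ - Real.log (π/4))
        = 2*θ*lam₂/γ*Real.log ε + lam₂/γ*Cδ - lam₂/γ*Real.log (π/4) := by ring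
    have e3 : (2*θ*lam₂/γ - 16*π/γ^2)*Real.log ε
        = 2*θ*lam₂/γ*Real.log ε - 16*π/γ^2*Real.log ε := by ring
    have e4 : (8:ℝ)*π/γ^2*Real.log (2*r0^2) = (1/2)*(16*π/γ^2*Real.log (2*r0^2)) := by ring
    have e5 : (32:ℝ)*π/γ^2*Real.log ε = 2*(16*π/γ^2*Real.log ε) := by ring
    linarith [hD, hX2, hYbound, e1, e2, e3, e4, e5]
  exact hgoal
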